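/- A function f : Xⁿ → Y is a quasi-polynomial function if and only if it is a quasi-Sugeno integral. -/

import Mathlib

/-- Lattice polynomial functions in `n` variables on a bounded distributive lattice. -/
inductive IsLatticePolynomial {L : Type*} [DistribLattice L] [BoundedOrder L] {n : ℕ} :
    ((Fin n → L) → L) → Prop
  | proj (i : Fin n) : IsLatticePolynomial (fun x => x i)
  | const (c : L) : IsLatticePolynomial (fun _ => c)
  | inf {p q : (Fin n → L) → L} :
      IsLatticePolynomial p → IsLatticePolynomial q → IsLatticePolynomial (fun x => p x ⊓ q x)
  | sup {p q : (Fin n → L) → L} :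
      IsLatticePolynomial p → IsLatticePolynomial q → IsLatticePolynomial (fun x => p x ⊔ q x)

/-- The ternary median in a lattice. -/
def med {L : Type*} [Lattice L] (a b c : L) : L := (a ⊓ b) ⊔ (b ⊓ c) ⊔ (c ⊓ a)

/-- `f` is a quasi-polynomial function. -/
def IsQuasiPolynomial {X Y : Type*} [DistribLattice X] [BoundedOrder X]
    [DistribLattice Y] [BoundedOrder Y] {n : ℕ} (f : (Fin n → X) → Y) : Prop :=
  ∃ (p : (Fin n → Y) → Y) (φ : X → Y), IsLatticePolynomial p ∧
    (∀ x : X, φ x = med (φ ⊥) (φ x) (φ ⊤)) ∧ (∀ x, f x = p (fun i => φ (x i)))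

/-- `f` is a quasi-Sugeno integral: as above, with `p` a Sugeno integral
(a polynomial function whose range is all of `Y`). -/
def IsQuasiSugeno {X Y : Type*} [DistribLattice X] [BoundedOrder X]
    [DistribLattice Y] [BoundedOrder Y] {n : ℕ} (f : (Fin n → X) → Y) : Prop :=
  ∃ (p : (Fin n → Y) → Y) (φ : X → Y), IsLatticePolynomial p ∧ Set.range p = Set.univ ∧
    (∀ x : X, φ x = med (φ ⊥) (φ x) (φ ⊤)) ∧ (∀ x, f x = p (fun i => φ (x i)))

section AuxMed
variable {L : Type*} [DistribLattice L]

lemma med_outer (a b : L) : med a b a = a := by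
  simp [med, inf_comm]

lemma med_of_chain {a b c : L} (h1 : a ≤ b) (h2 : b ≤ c) : med a b c = b := by
  rw [med, inf_eq_left.mpr h1, inf_eq_left.mpr h2, inf_eq_right.mpr (h1.trans h2),
    sup_eq_right.mpr h1, sup_eq_left.mpr h1]

lemma clamp_comm {u v : L} (c : L) (h : u ≤ v) : (c ⊔ u) ⊓ v = (c ⊓ v) ⊔ u := by
  rw [inf_sup_right, inf_eq_left.mpr h]

lemma clamp_inf (u v a b : L) : ((a ⊔ u) ⊓ v) ⊓ ((b ⊔ u) ⊓ v) = ((a ⊓ b) ⊔ u) ⊓ v := by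
  rw [sup_inf_right]
  ac_rfl

lemma clamp_sup (u v a b : L) : ((a ⊔ u) ⊓ v) ⊔ ((b ⊔ u) ⊓ v) = ((a ⊔ b) ⊔ u) ⊓ v := by
  rw [← inf_sup_right, sup_sup_sup_comm, sup_idem]

lemma clamp_med (u v a b c : L) :
    med ((a ⊔ u) ⊓ v) ((b ⊔ u) ⊓ v) ((c ⊔ u) ⊓ v) = ((med a b c) ⊔ u) ⊓ v := by
  rw [med, med, clamp_inf, clamp_inf, clamp_inf, clamp_sup, clamp_sup]

end AuxMed

section AuxPoly
variable {L : Type*} [DistribLattice L] [BoundedOrder L] {n : ℕ}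

lemma IsLatticePolynomial.mono {p : (Fin n → L) → L} (hp : IsLatticePolynomial p) :
    Monotone p := by
  induction hp with
  | proj i => exact fun y z h => h i
  | const c => exact monotone_const
  | inf _ _ ih1 ih2 => exact ih1.inf ih2
  | sup _ _ ih1 ih2 => exact ih1.sup ih2

lemma IsLatticePolynomial.bot_le_top {p : (Fin n → L) → L} (hp : IsLatticePolynomial p) :
    p (fun _ => ⊥) ≤ p (fun _ => ⊤) :=
  hp.mono (fun _ => bot_le)

lemma IsLatticePolynomial.diag {p : (Fin n → L) → L} (hp : IsLatticePolynomial p) (c : L) :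
    p (fun _ => c) = (c ⊔ p (fun _ => ⊥)) ⊓ p (fun _ => ⊤) := by
  induction hp with
  | proj i => simp
  | const d => simp
  | @inf p q h1 h2 ih1 ih2 =>
      simp only at ih1 ih2 ⊢
      rw [ih1, ih2, sup_inf_left]
      ac_rfl
  | @sup p q h1 h2 ih1 ih2 =>
      simp only at ih1 ih2 ⊢
      rw [ih1, ih2, clamp_comm _ h1.bot_le_top, clamp_comm _ h2.bot_le_top,
        clamp_comm _ (sup_le_sup h1.bot_le_top h2.bot_le_top), inf_sup_left]
      ac_rfl

lemma IsLatticePolynomial.lower {p : (Fin n → L) → L} (hp : IsLatticePolynomial p)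
    (y : Fin n → L) : p (fun _ => ⊤) ⊓ Finset.univ.inf y ≤ p y := by
  induction hp with
  | proj i =>
      exact le_trans inf_le_right (Finset.inf_le (Finset.mem_univ i))
  | const c => exact inf_le_left
  | @inf p q h1 h2 ih1 ih2 =>
      simp only at ih1 ih2 ⊢
      exact le_inf ((inf_le_inf inf_le_left le_rfl).trans ih1)
        ((inf_le_inf inf_le_right le_rfl).trans ih2)
  | @sup p q h1 h2 ih1 ih2 =>
      simp only at ih1 ih2 ⊢
      rw [inf_sup_right]
      exact sup_le_sup ih1 ih2

lemma IsLatticePolynomial.upper {p : (Fin n → L) → L} (hp : IsLatticePolynomial p)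
    (y : Fin n → L) : p y ≤ p (fun _ => ⊥) ⊔ Finset.univ.sup y := by
  induction hp with
  | proj i =>
      exact le_trans (Finset.le_sup (Finset.mem_univ i)) le_sup_right
  | const c => exact le_sup_left
  | @inf p q h1 h2 ih1 ih2 =>
      simp only at ih1 ih2 ⊢
      rw [sup_inf_right]
      exact le_inf (inf_le_left.trans ih1) (inf_le_right.trans ih2)
  | @sup p q h1 h2 ih1 ih2 =>
      simp only at ih1 ih2 ⊢
      exact sup_le (ih1.trans (sup_le_sup_right le_sup_left _))
        (ih2.trans (sup_le_sup_right le_sup_right _))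


lemma isPoly_finsetInf (s : Finset (Fin n)) :
    IsLatticePolynomial (fun y : Fin n → L => s.inf y) := by
  classical
  induction s using Finset.induction_on with
  | empty => simpa using IsLatticePolynomial.const (⊤ : L)
  | insert _ _ ha ih =>
      rename_i a s
      have : (fun y : Fin n → L => (insert a s).inf y) = fun y => y a ⊓ s.inf y := by
        funext y; simp [Finset.inf_insert]
      rw [this]
      exact (IsLatticePolynomial.proj a).inf ih

lemma isPoly_finsetSup (s : Finset (Fin n)) :
    IsLatticePolynomial (fun y : Fin n → L => s.sup y) := by
  classical
  induction s using Finset.induction_on with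
  | empty => simpa using IsLatticePolynomial.const (⊥ : L)
  | insert _ _ ha ih =>
      rename_i a s
      have : (fun y : Fin n → L => (insert a s).sup y) = fun y => y a ⊔ s.sup y := by
        funext y; simp [Finset.sup_insert]
      rw [this]
      exact (IsLatticePolynomial.proj a).sup ih

lemma cross1 {p q : (Fin n → L) → L} (h1 : IsLatticePolynomial p)
    (h2 : IsLatticePolynomial q) (u : L) (y : Fin n → L) :
    p y ⊓ q (fun _ => u) ≤ (p y ⊓ q y) ⊔ (p (fun _ => u) ⊓ q (fun _ => u)) := by
  have hqb : q (fun _ => ⊥) ≤ q y := h2.mono (fun _ => bot_le)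
  have hpt : p y ≤ p (fun _ => ⊤) := h1.mono (fun _ => le_top)
  have hpu : p (fun _ => ⊤) ⊓ u ≤ p (fun _ => u) := by
    rw [h1.diag u]
    exact le_inf (inf_le_right.trans le_sup_left) inf_le_left
  have hqu : u ⊓ q (fun _ => ⊤) ≤ q (fun _ => u) := by
    rw [h2.diag u]
    exact le_inf (inf_le_left.trans le_sup_left) inf_le_right
  calc p y ⊓ q (fun _ => u)
      = p y ⊓ ((u ⊔ q (fun _ => ⊥)) ⊓ q (fun _ => ⊤)) := by rw [← h2.diag u]
    _ = ((p y ⊓ u) ⊔ (p y ⊓ q (fun _ => ⊥))) ⊓ q (fun _ => ⊤) := by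
        rw [← inf_assoc, inf_sup_left]
    _ = (p y ⊓ u ⊓ q (fun _ => ⊤)) ⊔ (p y ⊓ q (fun _ => ⊥) ⊓ q (fun _ => ⊤)) := by
        rw [inf_sup_right]
    _ ≤ (p (fun _ => u) ⊓ q (fun _ => u)) ⊔ (p y ⊓ q y) := by
        apply sup_le_sup
        · refine le_inf ?_ ?_
          · exact le_trans inf_le_left (le_trans (inf_le_inf_right _ hpt) hpu)
          · exact le_trans (le_of_eq (inf_assoc _ _ _)) (le_trans inf_le_right hqu)
        · exact le_inf (inf_le_left.trans inf_le_left)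
            ((inf_le_left.trans inf_le_right).trans hqb)
    _ = (p y ⊓ q y) ⊔ (p (fun _ => u) ⊓ q (fun _ => u)) := sup_comm _ _

lemma cross2 {p q : (Fin n → L) → L} (h1 : IsLatticePolynomial p)
    (h2 : IsLatticePolynomial q) (v : L) (y : Fin n → L) :
    p y ⊓ q (fun _ => v) ≤ (p y ⊓ p (fun _ => v)) ⊔ q (fun _ => ⊥) := by
  have hpt : p y ≤ p (fun _ => ⊤) := h1.mono (fun _ => le_top)
  have hpv : v ⊓ p (fun _ => ⊤) ≤ p (fun _ => v) := by
    rw [h1.diag v]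
    exact le_inf (inf_le_left.trans le_sup_left) inf_le_right
  calc p y ⊓ q (fun _ => v)
      = p y ⊓ ((v ⊔ q (fun _ => ⊥)) ⊓ q (fun _ => ⊤)) := by rw [← h2.diag v]
    _ ≤ p y ⊓ (v ⊔ q (fun _ => ⊥)) := inf_le_inf_left _ inf_le_left
    _ = (p y ⊓ v) ⊔ (p y ⊓ q (fun _ => ⊥)) := inf_sup_left _ _ _
    _ ≤ (p y ⊓ p (fun _ => v)) ⊔ q (fun _ => ⊥) := by
        apply sup_le_sup
        · refine le_inf inf_le_left ?_
          exact le_trans (inf_le_inf_right _ hpt) (inf_comm (p fun _ => ⊤) v ▸ hpv)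
        · exact inf_le_right


lemma IsLatticePolynomial.clampEq {p : (Fin n → L) → L} (hp : IsLatticePolynomial p)
    {u v : L} (huv : u ≤ v) (y : Fin n → L) :
    p (fun i => (y i ⊔ u) ⊓ v) = (p y ⊔ p (fun _ => u)) ⊓ p (fun _ => v) := by
  induction hp with
  | proj i => simp
  | const c => simp
  | @inf p q h1 h2 ih1 ih2 =>
      simp only at ih1 ih2 ⊢
      rw [ih1, ih2]
      apply le_antisymm
      · refine le_inf ?_
          (le_inf (inf_le_left.trans inf_le_right) (inf_le_right.trans inf_le_right))
        calc ((p y ⊔ p (fun _ => u)) ⊓ p (fun _ => v)) ⊓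
              ((q y ⊔ q (fun _ => u)) ⊓ q (fun _ => v))
            ≤ (p y ⊔ p (fun _ => u)) ⊓ (q y ⊔ q (fun _ => u)) :=
              inf_le_inf inf_le_left inf_le_left
          _ = (p y ⊓ q y ⊔ p y ⊓ q (fun _ => u)) ⊔
              (p (fun _ => u) ⊓ q y ⊔ p (fun _ => u) ⊓ q (fun _ => u)) := by
              rw [inf_sup_right, inf_sup_left, inf_sup_left]
          _ ≤ p y ⊓ q y ⊔ p (fun _ => u) ⊓ q (fun _ => u) := by
              refine sup_le (sup_le le_sup_left (cross1 h1 h2 u y)) (sup_le ?_ le_sup_right)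
              rw [inf_comm]
              exact (cross1 h2 h1 u y).trans
                (sup_le_sup (le_of_eq (inf_comm _ _)) (le_of_eq (inf_comm _ _)))
      · exact le_inf
          (le_inf (inf_le_left.trans (sup_le_sup inf_le_left inf_le_left))
            (inf_le_right.trans inf_le_left))
          (le_inf (inf_le_left.trans (sup_le_sup inf_le_right inf_le_right))
            (inf_le_right.trans inf_le_right))
  | @sup p q h1 h2 ih1 ih2 =>
      simp only at ih1 ih2 ⊢
      have hpuv : p (fun _ => u) ≤ p (fun _ => v) := h1.mono (fun _ => huv)
      have hquv : q (fun _ => u) ≤ q (fun _ => v) := h2.mono (fun _ => huv)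
      have hpbu : p (fun _ => ⊥) ≤ p (fun _ => u) := h1.mono (fun _ => bot_le)
      have hqbu : q (fun _ => ⊥) ≤ q (fun _ => u) := h2.mono (fun _ => bot_le)
      rw [ih1, ih2, clamp_comm _ hpuv, clamp_comm _ hquv,
        clamp_comm _ (sup_le_sup hpuv hquv)]
      apply le_antisymm
      · refine sup_le (sup_le ?_ ?_) (sup_le ?_ ?_)
        · exact le_sup_left.trans' (inf_le_inf le_sup_left le_sup_left)
        · exact le_sup_right.trans' le_sup_left
        · exact le_sup_left.trans' (inf_le_inf le_sup_right le_sup_right)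
        · exact le_sup_right.trans' le_sup_right
      · refine sup_le ?_ (sup_le (le_sup_right.trans le_sup_left) (le_sup_right.trans le_sup_right))
        calc (p y ⊔ q y) ⊓ (p (fun _ => v) ⊔ q (fun _ => v))
            = (p y ⊓ p (fun _ => v) ⊔ p y ⊓ q (fun _ => v)) ⊔
              (q y ⊓ p (fun _ => v) ⊔ q y ⊓ q (fun _ => v)) := by
              rw [inf_sup_right, inf_sup_left, inf_sup_left]
          _ ≤ ((p y ⊓ p (fun _ => v)) ⊔ p (fun _ => u)) ⊔
              ((q y ⊓ q (fun _ => v)) ⊔ q (fun _ => u)) := by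
              refine sup_le (sup_le ?_ ?_) (sup_le ?_ ?_)
              · exact le_sup_left.trans le_sup_left
              · exact ((cross2 h1 h2 v y).trans (sup_le_sup le_rfl hqbu)).trans
                  (sup_le (le_sup_left.trans le_sup_left) (le_sup_right.trans le_sup_right))
              · exact ((cross2 h2 h1 v y).trans (sup_le_sup le_rfl hpbu)).trans
                  (sup_le (le_sup_left.trans le_sup_right) (le_sup_right.trans le_sup_left))
              · exact le_sup_left.trans le_sup_right

end AuxPoly

theorem statement_4 {X Y : Type*} [DistribLattice X] [BoundedOrder X]
    [DistribLattice Y] [BoundedOrder Y] {n : ℕ} (hn : 0 < n)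
    (f : (Fin n → X) → Y) :
    IsQuasiPolynomial f ↔ IsQuasiSugeno f := by
  constructor
  · rintro ⟨p, φ, hp, hφ, hf⟩
    haveI : Nonempty (Fin n) := ⟨⟨0, hn⟩⟩
    have hc : p (fun _ => ⊥) ≤ p (fun _ => ⊤) := hp.bot_le_top
    refine ⟨fun y => med (Finset.univ.inf y) (p y) (Finset.univ.sup y),
            fun z => (φ z ⊔ p (fun _ => ⊥)) ⊓ p (fun _ => ⊤), ?_, ?_, ?_, ?_⟩
    · show IsLatticePolynomial (fun y =>
        ((Finset.univ.inf y ⊓ p y) ⊔ (p y ⊓ Finset.univ.sup y)) ⊔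
          (Finset.univ.sup y ⊓ Finset.univ.inf y))
      exact (((isPoly_finsetInf _).inf hp).sup (hp.inf (isPoly_finsetSup _))).sup
        ((isPoly_finsetSup _).inf (isPoly_finsetInf _))
    · rw [Set.range_eq_univ]
      intro c
      refine ⟨fun _ => c, ?_⟩
      beta_reduce
      rw [Finset.inf_const Finset.univ_nonempty, Finset.sup_const Finset.univ_nonempty,
        med_outer]
    · intro z
      rw [clamp_med, ← hφ z]
    · intro x
      have hP : p (fun i => (φ (x i) ⊔ p (fun _ => ⊥)) ⊓ p (fun _ => ⊤)) = f x := by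
        rw [hp.clampEq hc, hp.diag (p (fun _ => ⊥)), hp.diag (p (fun _ => ⊤)),
          sup_idem, inf_eq_left.mpr hc, sup_eq_left.mpr hc, inf_idem,
          sup_eq_left.mpr (hp.mono (fun _ => bot_le)),
          inf_eq_left.mpr (hp.mono (fun _ => le_top))]
        exact (hf x).symm
      have hA : Finset.univ.inf (fun i => (φ (x i) ⊔ p (fun _ => ⊥)) ⊓ p (fun _ => ⊤)) ≤
          p (fun i => (φ (x i) ⊔ p (fun _ => ⊥)) ⊓ p (fun _ => ⊤)) := by
        have h1 : Finset.univ.inf (fun i => (φ (x i) ⊔ p (fun _ => ⊥)) ⊓ p (fun _ => ⊤)) ≤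
            p (fun _ => ⊤) :=
          (Finset.inf_le (Finset.mem_univ (⟨0, hn⟩ : Fin n))).trans inf_le_right
        exact le_trans (le_of_eq (inf_eq_right.mpr h1).symm) (hp.lower _)
      have hB : p (fun i => (φ (x i) ⊔ p (fun _ => ⊥)) ⊓ p (fun _ => ⊤)) ≤
          Finset.univ.sup (fun i => (φ (x i) ⊔ p (fun _ => ⊥)) ⊓ p (fun _ => ⊤)) := by
        have h2 : p (fun _ => ⊥) ≤
            Finset.univ.sup (fun i => (φ (x i) ⊔ p (fun _ => ⊥)) ⊓ p (fun _ => ⊤)) := by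
          refine le_trans ?_ (Finset.le_sup (Finset.mem_univ (⟨0, hn⟩ : Fin n)))
          exact le_inf le_sup_right hc
        exact le_trans (hp.upper _) (le_of_eq (sup_eq_right.mpr h2))
      beta_reduce
      rw [med_of_chain hA hB, hP]
  · rintro ⟨p, φ, hp, _, hφ, hf⟩
    exact ⟨p, φ, hp, hφ, hf⟩
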